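/- arXiv:1104.1366 — 2 statements merged into one kernel-verified Lean document; each statement's English description precedes it below -/
import Mathlib

section
/- Let K be a field and A a noetherian K-algebra such that for every simple left A-module L, every element of the endomorphism ring End_A(L) is algebraic over K. If A is (⋄)-extremal, then every element of the center Z(A) of A is algebraic over K. -/
universe u

/-- A module is monolithic if the intersection of all its nonzero submodules is nonzero. -/
def IsMonolithic (R : Type u) (M : Type v) [Ring R] [AddCommGroup M] [Module R M] : Prop :=
  sInf {N : Submodule R M | N ≠ ⊥} ≠ ⊥

/-- Property `(⋄)`: every finitely generated monolithic left module is artinian. -/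
def HasDiamond (R : Type u) [Ring R] : Prop :=
  ∀ (M : Type u) [AddCommGroup M] [Module R M],
    Module.Finite R M → IsMonolithic R M → IsArtinian R M

/-- A ring is `(⋄)`-extremal if it does not have property `(⋄)` but every proper
homomorphic image (surjective, non-injective ring-homomorphic image) has property `(⋄)`. -/
def DiamondExtremal (A : Type u) [Ring A] : Prop :=
  ¬ HasDiamond A ∧
    ∀ (B : Type u) [Ring B] (f : A →+* B),
      Function.Surjective f → ¬ Function.Injective f → HasDiamond B

/-!
Since `A` lacks `(⋄)`, there is a finitely generated monolithic `A`-module `M` that is not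
artinian; it is faithful, for otherwise it would be such a module over the proper image
`A ⧸ ann M`, which has `(⋄)`. A central `z` acts on the simple monolith `L` of `M` by an
endomorphism, so `p(z) L = 0` for some `p ≠ 0`. Then multiplication by the central element `p(z)`
is a non-injective endomorphism of the noetherian monolithic module `M`. By Fitting's lemma some
power `p(z)ⁿ` has kernel disjoint from its image; the kernel contains `L`, and a nonzero image
would too, so `p(z)ⁿ M = 0`. By faithfulness `p(z)ⁿ = 0`, and `z` is a root of `pⁿ ≠ 0`.
-/

open Function Polynomial

def monolith (R M : Type*) [Ring R] [AddCommGroup M] [Module R M] : Submodule R M :=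
  sInf {N : Submodule R M | N ≠ ⊥}

theorem monolith_le {R M : Type*} [Ring R] [AddCommGroup M] [Module R M] {N : Submodule R M}
    (hN : N ≠ ⊥) : monolith R M ≤ N :=
  sInf_le hN

theorem Module.End.smulLeft_pow_apply {R M : Type*} [Semiring R] [AddCommMonoid M] [Module R M]
    {z : R} (hz : z ∈ Set.center R) (n : ℕ) (v : M) : (smulLeft z hz ^ n) v = z ^ n • v := by
  induction n with
  | zero => simp
  | succ n ih => rw [pow_succ', mul_apply, ih, smulLeft_apply, smul_smul, ← pow_succ']

theorem Polynomial.aeval_smul_eq_sum {K A M : Type*} [CommSemiring K] [Semiring A] [Algebra K A]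
    [AddCommMonoid M] [Module A M] (z : A) (p : K[X]) (v : M) :
    aeval z p • v =
      ∑ i ∈ Finset.range (p.natDegree + 1), algebraMap K A (p.coeff i) • z ^ i • v := by
  simp only [aeval_eq_sum_range, Finset.sum_smul, Algebra.smul_def, mul_smul]

theorem Polynomial.aeval_mem_center {K A : Type*} [CommSemiring K] [Semiring A] [Algebra K A]
    {z : A} (hz : z ∈ Set.center A) (p : K[X]) : aeval z p ∈ Set.center A :=
  let z' : Subalgebra.center K A := ⟨z, hz⟩
  aeval_algHom_apply (Subalgebra.center K A).val z' p ▸ (aeval z' p).2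

namespace IsMonolithic

variable {R M : Type*} [Ring R] [AddCommGroup M] [Module R M]

theorem monolith_ne_bot (h : IsMonolithic R M) : monolith R M ≠ ⊥ := h

theorem isSimpleModule (h : IsMonolithic R M) : IsSimpleModule R (monolith R M) :=
  isSimpleModule_iff_isAtom.mpr ⟨h, fun _ hlt ↦ by_contra fun hN ↦ hlt.not_ge (monolith_le hN)⟩

theorem isNilpotent_of_ker_ne_bot [IsNoetherian R M] (h : IsMonolithic R M) {f : Module.End R M}
    (hf : LinearMap.ker f ≠ ⊥) : IsNilpotent f := by
  obtain ⟨n, hdisj, hn⟩ :=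
    (f.eventually_disjoint_ker_pow_range_pow.and (Filter.eventually_ge_atTop 1)).exists
  refine ⟨n, LinearMap.range_eq_bot.mp (by_contra fun hrange ↦ h ?_)⟩
  have hker : LinearMap.ker f ≤ LinearMap.ker (f ^ n) := by
    simpa using f.iterateKer.monotone hn
  exact le_bot_iff.mp (hdisj ((monolith_le hf).trans hker) (monolith_le hrange))

theorem of_restrictScalars (R : Type*) {S : Type*} [Ring R] [Ring S] [Module R M] [Module S M]
    [SMul R S] [IsScalarTower R S M] (h : IsMonolithic R M) : IsMonolithic S M := by
  have hle : monolith R M ≤ (monolith S M).restrictScalars R := by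
    rw [monolith, monolith, Submodule.restrictScalars_sInf]
    exact le_sInf <| Set.forall_mem_image.mpr fun N hN ↦
      monolith_le ((Submodule.restrictScalars_eq_bot_iff R S M).not.mpr hN)
  refine fun hbot : monolith S M = ⊥ ↦ h.monolith_ne_bot (le_bot_iff.mp ?_)
  simpa only [hbot, Submodule.restrictScalars_bot] using hle

theorem isNilpotent_of_smul_eq_zero [IsNoetherian R M] [FaithfulSMul R M] (h : IsMonolithic R M)
    {a : R} (ha : a ∈ Set.center R) {x : M} (hx : x ≠ 0) (hax : a • x = 0) : IsNilpotent a := by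
  obtain ⟨n, hn⟩ := h.isNilpotent_of_ker_ne_bot (f := Module.End.smulLeft a ha)
    ((Submodule.ne_bot_iff _).mpr ⟨x, hax, hx⟩)
  refine ⟨n, eq_of_smul_eq_smul (α := M) fun m ↦ ?_⟩
  simpa [Module.End.smulLeft_pow_apply] using congr($hn m)

end IsMonolithic

section Quotient

variable {A M : Type*} [Ring A] [AddCommGroup M] [Module A M] (I : Ideal A) [I.IsTwoSided]
  [Module (A ⧸ I) M] [IsScalarTower A (A ⧸ I) M]

theorem Ideal.Quotient.mk_smul_of_isScalarTower (a : A) (m : M) :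
    Ideal.Quotient.mk I a • m = a • m := by
  rw [← smul_one_smul (A ⧸ I) a m]
  congr 1
  show I.mkQ a = a • I.mkQ 1
  rw [← LinearMap.map_smul, smul_eq_mul, mul_one]

theorem Submodule.restrictScalars_surjective_of_quotient :
    Surjective (restrictScalars A : Submodule (A ⧸ I) M → Submodule A M) := fun N ↦
  ⟨{ N with
      smul_mem' := fun b m hm ↦ Ideal.Quotient.mk_surjective b |>.elim fun a ha ↦ by
        simpa [← ha, Ideal.Quotient.mk_smul_of_isScalarTower] using N.smul_mem a hm }, rfl⟩

theorem isArtinian_of_tower_quotient [IsArtinian (A ⧸ I) M] : IsArtinian A M :=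
  (OrderIso.ofSurjective (Submodule.restrictScalarsEmbedding A (A ⧸ I) M)
    (Submodule.restrictScalars_surjective_of_quotient I)).symm.toOrderEmbedding.wellFoundedLT

end Quotient

theorem faithfulSMul_of_not_isArtinian {A : Type u} [Ring A]
    (hquot : ∀ (B : Type u) [Ring B] (f : A →+* B), Surjective f → ¬ Injective f → HasDiamond B)
    {M : Type u} [AddCommGroup M] [Module A M] [Module.Finite A M] (hmono : IsMonolithic A M)
    (hnart : ¬ IsArtinian A M) : FaithfulSMul A M := by
  rw [← Module.annihilator_eq_bot]
  by_contra hann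
  let := Module.quotientAnnihilator (R := A) (M := M)
  have hninj : ¬ Injective (Ideal.Quotient.mk (Module.annihilator A M)) := by
    rwa [RingHom.injective_iff_ker_eq_bot, Ideal.mk_ker]
  have : IsArtinian (A ⧸ Module.annihilator A M) M := hquot _ _ Ideal.Quotient.mk_surjective hninj M
    (.of_restrictScalars_finite A _ M) (hmono.of_restrictScalars A)
  exact hnart (isArtinian_of_tower_quotient (Module.annihilator A M))

/-- Proposition 5.1: let `A` be a noetherian `K`-algebra such that every
endomorphism of every simple left `A`-module is algebraic over `K` (each `f : End_A L`
satisfies a nonzero polynomial with coefficients in `K`, acting on `L` through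
`algebraMap K A`).  If `A` is `(⋄)`-extremal, then every central element of `A` is
algebraic over `K`. -/
theorem center_algebraic_of_diamondExtremal {K A : Type u} [Field K] [Ring A] [Algebra K A]
    [IsNoetherianRing A]
    (hEnd : ∀ (L : Type u) [AddCommGroup L] [Module A L], IsSimpleModule A L →
      ∀ f : Module.End A L, ∃ p : Polynomial K, p ≠ 0 ∧
        ∀ v : L,
          (∑ i ∈ Finset.range (p.natDegree + 1),
            algebraMap K A (p.coeff i) • ((f ^ i) v)) = 0)
    (hext : DiamondExtremal A) :
    ∀ z ∈ Subring.center A, IsAlgebraic K z := by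
  rintro z (hz : z ∈ Set.center A)
  obtain ⟨hnot, hquot⟩ := hext
  obtain ⟨M, _, _, _, hmono, hnart⟩ : ∃ (M : Type u) (_ : AddCommGroup M) (_ : Module A M),
      Module.Finite A M ∧ IsMonolithic A M ∧ ¬ IsArtinian A M := by
    simpa [HasDiamond] using hnot
  have := faithfulSMul_of_not_isArtinian hquot hmono hnart
  obtain ⟨p, hp0, hp⟩ := hEnd _ hmono.isSimpleModule (Module.End.smulLeft z hz)
  obtain ⟨x, hxL, hx0⟩ := (Submodule.ne_bot_iff _).mp hmono.monolith_ne_bot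
  have hpx : aeval z p • x = 0 := by
    simpa [aeval_smul_eq_sum, Module.End.smulLeft_pow_apply] using
      congr(Subtype.val $(hp ⟨x, hxL⟩))
  obtain ⟨n, hn⟩ := hmono.isNilpotent_of_smul_eq_zero (aeval_mem_center hz p) hx0 hpx
  exact ⟨p ^ n, pow_ne_zero n hp0, by rw [map_pow, hn]⟩
end

section
/- Let K be a field of characteristic zero and let r ≥ 1 be an integer. Then the algebra A = K⟨a,b⟩/(ab − ba − a^r) has a finitely generated monolithic left module that is not artinian; that is, A does not have property (⋄). -/
universe u

noncomputable section

/-- The defining relation `ab = ba + a^r` of the Ore extension `K[a][b; d]` with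
`d(a) = a^r`, as a relation on the free algebra on two generators. -/
def oreRel (K : Type u) [Field K] (r : ℕ) :
    FreeAlgebra K (Fin 2) → FreeAlgebra K (Fin 2) → Prop := fun X Y =>
  X = FreeAlgebra.ι K (0 : Fin 2) * FreeAlgebra.ι K (1 : Fin 2) ∧
  Y = FreeAlgebra.ι K (1 : Fin 2) * FreeAlgebra.ι K (0 : Fin 2) +
      (FreeAlgebra.ι K (0 : Fin 2)) ^ r

/-- The Ore extension `A = K⟨a,b⟩/(ab − ba − a^r)`. -/
abbrev OreExt (K : Type u) [Field K] (r : ℕ) := RingQuot (oreRel K r)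

/-!
Let `A` act on `K[X] × K[X]` by `a (p, q) = (p(X + 1), X q)` and
`b (p, q) = (X p(X + r - 1) + q(1), -X^r q')`. The submodule `K[X] × 0` is simple: finite
differences `p(X + 1) - p` bring any nonzero `p` down to a constant, and `p ↦ X p(X + r - 1)`
builds every degree back up. It is also essential: `b + k a^(r-1)` acts on the second factor by
`q ↦ X^(r-1) (k q - X q')`, which kills the coefficient of `X^k` and keeps the others, so
applying it with `k = deg q` until `q` is a monomial `c X^k` lands in `K[X] × 0`, on a first
component taking the value `c ≠ 0` at `-k`. Hence the module is monolithic; it is cyclic on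
`(0, 1)`, and the submodules `{(p, q) | X^k ∣ q}` form a strictly descending chain.
-/

open Polynomial

namespace Polynomial

variable {R : Type*}

theorem degree_taylor_sub_lt [CommRing R] {p : R[X]} (hp : p ≠ 0) (c : R) :
    (taylor c p - p).degree < p.degree := by
  have hp' : taylor c p ≠ 0 := by
    rwa [Ne, ← degree_eq_bot, degree_taylor, degree_eq_bot]
  simpa only [degree_taylor] using
    degree_sub_lt_left (degree_taylor p c) hp' (leadingCoeff_taylor c p)

theorem eq_C_of_taylor_one_eq [CommRing R] [IsDomain R] [CharZero R] {p : R[X]}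
    (h : taylor 1 p = p) : p = C (p.eval 0) := by
  have hnat (n : ℕ) : p.eval (n : R) = p.eval 0 := by
    induction n with
    | zero => rw [Nat.cast_zero]
    | succ n ih => rw [Nat.cast_succ, ← ih, ← taylor_eval, h]
  refine eq_of_infinite_eval_eq _ _ (Set.infinite_of_injective_forall_mem
    Nat.cast_injective fun n => ?_)
  simp [hnat n]

theorem one_mem_of_taylor_one_mem {K : Type*} [Field K] [CharZero K] (P : Submodule K K[X])
    (hP : ∀ p ∈ P, taylor 1 p ∈ P) {p : K[X]} (hp : p ∈ P) (hp0 : p ≠ 0) : 1 ∈ P := by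
  induction p using degree_lt_wf.induction with
  | _ p ih =>
  by_cases hfix : taylor 1 p - p = 0
  · have hconst := eq_C_of_taylor_one_eq (sub_eq_zero.mp hfix)
    have hc : p.eval 0 ≠ 0 := fun h0 => hp0 (by rw [hconst, h0, C_0])
    have h1 : (p.eval 0)⁻¹ • p = 1 := by
      rw [hconst, smul_C, smul_eq_mul, eval_C, inv_mul_cancel₀ hc, C_1]
    exact h1 ▸ P.smul_mem _ hp
  · exact ih _ (degree_taylor_sub_lt hp0 1) (P.sub_mem (hP p hp) hp) hfix

theorem eq_top_of_X_mul_taylor_mem [CommRing R] (P : Submodule R R[X]) (c : R)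
    (h1 : 1 ∈ P) (hP : ∀ p ∈ P, X * taylor c p ∈ P) : P = ⊤ := by
  refine Submodule.eq_top_iff'.mpr fun p => ?_
  induction p using degree_lt_wf.induction with
  | _ p ih =>
  rcases eq_or_ne p 0 with rfl | hp0
  · exact P.zero_mem
  have hdiv : taylor (-c) p.divX ∈ P := ih _ (by rw [degree_taylor]; exact degree_divX_lt hp0)
  have hX : X * p.divX ∈ P := by
    simpa only [taylor_taylor, add_neg_cancel, taylor_zero] using hP _ hdiv
  rw [← X_mul_divX_add p, ← mul_one (C _), ← smul_eq_C_mul]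
  exact P.add_mem hX (P.smul_mem _ h1)

theorem card_support_X_pow_mul [Semiring R] (n : ℕ) (p : R[X]) :
    (X ^ n * p).support.card = p.support.card := by
  have : (X ^ n * p).support = p.support.map (addLeftEmbedding n) := by
    ext i
    simp only [mem_support_iff, coeff_X_pow_mul', Finset.mem_map, addLeftEmbedding_apply]
    constructor
    · intro h
      split_ifs at h with hi
      · exact ⟨i - n, h, by omega⟩
      · exact absurd rfl h
    · rintro ⟨j, hj, rfl⟩
      simpa using hj
  rw [this, Finset.card_map]

theorem support_C_mul_sub_X_mul_derivative [CommRing R] [IsDomain R] [CharZero R]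
    (k : ℕ) (f : R[X]) : (C (k : R) * f - X * derivative f).support = f.support.erase k := by
  ext i
  have hcoeff : (C (k : R) * f - X * derivative f).coeff i = ((k : R) - i) * f.coeff i := by
    cases i with
    | zero => simp
    | succ i => simp [coeff_X_mul, coeff_derivative]; ring
  simp only [Finset.mem_erase, mem_support_iff, hcoeff, ne_eq, mul_eq_zero, sub_eq_zero,
    Nat.cast_inj, not_or, eq_comm (a := k)]

theorem X_pow_dvd_X_pow_mul_derivative [CommSemiring R] {r k : ℕ} (hr : 1 ≤ r)
    {p : R[X]} (h : X ^ k ∣ p) : X ^ k ∣ X ^ r * derivative p :=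
  (pow_dvd_pow X (by omega : k ≤ r + (k - 1))).trans
    (pow_add (X : R[X]) r (k - 1) ▸ mul_dvd_mul_left _ (pow_sub_one_dvd_derivative_of_pow_dvd h))

end Polynomial

theorem Submodule.smul_mem_of_adjoin_eq_top {R A M : Type*} [CommSemiring R] [Semiring A]
    [Algebra R A] [AddCommMonoid M] [Module R M] [Module A M] [IsScalarTower R A M]
    {s : Set A} (hs : Algebra.adjoin R s = ⊤) (W : Submodule R M)
    (hW : ∀ x ∈ s, ∀ m ∈ W, x • m ∈ W) (y : A) {m : M} (hm : m ∈ W) : y • m ∈ W := by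
  have hy : y ∈ Algebra.adjoin R s := hs ▸ Algebra.mem_top
  induction hy using Algebra.adjoin_induction generalizing m with
  | mem x hx => exact hW x hx m hm
  | algebraMap c => simpa only [algebraMap_smul] using W.smul_mem c hm
  | add x y _ _ hx hy => simpa only [add_smul] using W.add_mem (hx hm) (hy hm)
  | mul x y _ _ hx hy => simpa only [mul_smul] using hx (hy hm)

namespace OreExt

variable {K : Type u} [Field K] {r : ℕ}

variable (K r) in
def a : OreExt K r := RingQuot.mkAlgHom K (oreRel K r) (FreeAlgebra.ι K 0)

variable (K r) in
def b : OreExt K r := RingQuot.mkAlgHom K (oreRel K r) (FreeAlgebra.ι K 1)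

theorem adjoin_a_b : Algebra.adjoin K {a K r, b K r} = ⊤ := by
  have hrange : Set.range (FreeAlgebra.ι K : Fin 2 → FreeAlgebra K (Fin 2)) =
      {FreeAlgebra.ι K 0, FreeAlgebra.ι K 1} := by
    ext; simp [Fin.exists_fin_two, eq_comm]
  rw [a, b, ← Set.image_pair, Algebra.adjoin_image, ← hrange, FreeAlgebra.adjoin_range_ι,
    Algebra.map_top, AlgHom.range_eq_top]
  exact RingQuot.mkAlgHom_surjective K _

section Lift

variable {E : Type*} [Semiring E] [Algebra K E]

def lift (α β : E) (h : α * β = β * α + α ^ r) : OreExt K r →ₐ[K] E :=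
  RingQuot.liftAlgHom K ⟨FreeAlgebra.lift K ![α, β], by rintro _ _ ⟨rfl, rfl⟩; simpa using h⟩

variable {α β : E} (h : α * β = β * α + α ^ r)

@[simp]
theorem lift_a : lift α β h (a K r) = α := by
  simp [lift, a, RingQuot.liftAlgHom_mkAlgHom_apply]

@[simp]
theorem lift_b : lift α β h (b K r) = β := by
  simp [lift, b, RingQuot.liftAlgHom_mkAlgHom_apply]

end Lift

variable (K) in
def opA : Module.End K (K[X] × K[X]) := (taylor 1).prodMap (LinearMap.mulLeft K X)

variable (K r) in
def opB : Module.End K (K[X] × K[X]) where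
  toFun m := (X * taylor ((r : K) - 1) m.1 + C (m.2.eval 1), -(X ^ r * derivative m.2))
  map_add' m n := by
    refine Prod.ext ?_ ?_ <;> simp only [Prod.fst_add, Prod.snd_add, map_add, eval_add] <;> ring
  map_smul' c m := by
    refine Prod.ext ?_ ?_ <;> simp [smul_eq_C_mul] <;> ring

theorem opA_apply (m : K[X] × K[X]) : opA K m = (taylor 1 m.1, X * m.2) := rfl

theorem opB_apply (m : K[X] × K[X]) :
    opB K r m = (X * taylor ((r : K) - 1) m.1 + C (m.2.eval 1), -(X ^ r * derivative m.2)) :=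
  rfl

theorem opA_pow_apply (n : ℕ) (m : K[X] × K[X]) :
    (opA K ^ n) m = (taylor (n : K) m.1, X ^ n * m.2) := by
  induction n with
  | zero => simp
  | succ n ih =>
    rw [pow_succ', Module.End.mul_apply, ih, opA_apply, taylor_taylor]
    simp only [Nat.cast_succ, pow_succ', mul_assoc, add_comm]

theorem opA_mul_opB : opA K * opB K r = opB K r * opA K + opA K ^ r := by
  refine LinearMap.ext fun ⟨p, q⟩ => ?_
  simp only [Module.End.mul_apply, LinearMap.add_apply, opA_pow_apply, opA_apply, opB_apply,
    Prod.mk_add_mk, Prod.mk.injEq, map_add, taylor_taylor, taylor_mul, taylor_X, taylor_C,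
    derivative_mul, derivative_X, eval_mul, eval_X]
  constructor
  · rw [add_sub_cancel, sub_add_cancel, C_1, one_mul]
    ring
  · ring

def rep : OreExt K r →ₐ[K] Module.End K (K[X] × K[X]) := OreExt.lift _ _ opA_mul_opB

instance : Module (OreExt K r) (K[X] × K[X]) := Module.compHom _ (rep (K := K)).toRingHom

instance : IsScalarTower K (OreExt K r) (K[X] × K[X]) where
  smul_assoc c y m := show rep (c • y) m = c • rep y m by simp

theorem a_smul (m : K[X] × K[X]) : a K r • m = (taylor 1 m.1, X * m.2) := by
  show rep _ m = _; simp [rep, opA_apply]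

theorem b_smul (m : K[X] × K[X]) : b K r • m =
    (X * taylor ((r : K) - 1) m.1 + C (m.2.eval 1), -(X ^ r * derivative m.2)) := by
  show rep _ m = _; simp [rep, opB_apply]

theorem a_pow_smul (n : ℕ) (m : K[X] × K[X]) :
    a K r ^ n • m = (taylor (n : K) m.1, X ^ n * m.2) := by
  show rep _ m = _; simp [rep, opA_pow_apply]

theorem b_add_natCast_mul_a_pow_smul (hr : 1 ≤ r) (k : ℕ) (m : K[X] × K[X]) :
    (b K r + (k : OreExt K r) * a K r ^ (r - 1)) • m =
      ((X + C (k : K)) * taylor ((r : K) - 1) m.1 + C (m.2.eval 1),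
        X ^ (r - 1) * (C (k : K) * m.2 - X * derivative m.2)) := by
  obtain ⟨s, rfl⟩ := Nat.exists_eq_add_of_le' hr
  rw [add_smul, mul_smul, Nat.cast_smul_eq_nsmul, b_smul, a_pow_smul]
  simp only [Nat.add_sub_cancel, Nat.cast_succ, add_sub_cancel_right, Prod.smul_mk,
    Prod.mk_add_mk, nsmul_eq_mul, ← C_eq_natCast, pow_succ]
  congr 1 <;> ring

variable (r) in
def xPowDvdSnd (hr : 1 ≤ r) (k : ℕ) : Submodule (OreExt K r) (K[X] × K[X]) :=
  { ((Ideal.span {(X : K[X]) ^ k}).restrictScalars K).comap (LinearMap.snd K K[X] K[X]) with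
    smul_mem' := fun y _ hm => by
      refine Submodule.smul_mem_of_adjoin_eq_top adjoin_a_b _ ?_ y hm
      simp only [Set.mem_insert_iff, Set.mem_singleton_iff, forall_eq_or_imp, forall_eq,
        Submodule.mem_comap, Submodule.restrictScalars_mem, LinearMap.snd_apply,
        Ideal.mem_span_singleton, a_smul, b_smul, dvd_neg]
      exact ⟨fun m hm => hm.mul_left X, fun m => X_pow_dvd_X_pow_mul_derivative hr⟩ }

theorem mem_xPowDvdSnd {hr : 1 ≤ r} {k : ℕ} {m : K[X] × K[X]} :
    m ∈ xPowDvdSnd r hr k ↔ X ^ k ∣ m.2 :=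
  Ideal.mem_span_singleton

theorem xPowDvdSnd_strictAnti (hr : 1 ≤ r) : StrictAnti (xPowDvdSnd (K := K) r hr) := by
  refine strictAnti_nat_of_succ_lt fun k => lt_of_le_of_ne (fun m hm => ?_) fun h => ?_
  · exact mem_xPowDvdSnd.mpr ((pow_dvd_pow X k.le_succ).trans (mem_xPowDvdSnd.mp hm))
  · have hk : ((0 : K[X]), (X : K[X]) ^ k) ∈ xPowDvdSnd r hr (k + 1) :=
      h ▸ mem_xPowDvdSnd.mpr dvd_rfl
    have := (pow_dvd_pow_iff (X_ne_zero (R := K)) not_isUnit_X).mp (mem_xPowDvdSnd.mp hk)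
    omega

theorem not_isArtinian (hr : 1 ≤ r) : ¬ IsArtinian (OreExt K r) (K[X] × K[X]) :=
  fun _ => not_strictAnti_of_wellFoundedLT _ (xPowDvdSnd_strictAnti (K := K) hr)

variable [CharZero K]

theorem exists_mk_zero_mem_of_snd_ne_zero (hr : 1 ≤ r)
    {N : Submodule (OreExt K r) (K[X] × K[X])} {m : K[X] × K[X]} (hm : m ∈ N) (hm₂ : m.2 ≠ 0) :
    ∃ p ≠ 0, (p, 0) ∈ N := by
  induction hn : m.2.support.card using Nat.strong_induction_on generalizing m with
  | _ n ih =>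
  have hmem := N.smul_mem (b K r + (m.2.natDegree : OreExt K r) * a K r ^ (r - 1)) hm
  rw [b_add_natCast_mul_a_pow_smul hr] at hmem
  set g := X ^ (r - 1) * (C (m.2.natDegree : K) * m.2 - X * derivative m.2)
  have hcard : g.support.card + 1 = n := by
    rw [card_support_X_pow_mul, support_C_mul_sub_X_mul_derivative,
      Finset.card_erase_add_one (natDegree_mem_support_of_nonzero hm₂), hn]
  rcases eq_or_ne g 0 with hg | hg
  · obtain ⟨j, c, hc, hmono⟩ : ∃ (j : ℕ) (c : K) (_ : c ≠ 0), m.2 = C c * X ^ j := by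
      rw [hg, support_zero, Finset.card_empty] at hcard
      rw [← card_support_eq_one]
      omega
    refine ⟨_, fun h => hc ?_, hg ▸ hmem⟩
    simpa [hmono] using congrArg (eval (-(m.2.natDegree : K))) h
  · exact ih g.support.card (by omega) hmem hg rfl

theorem mk_zero_mem_of_ne_bot (hr : 1 ≤ r) {N : Submodule (OreExt K r) (K[X] × K[X])}
    (hN : N ≠ ⊥) (p : K[X]) : (p, 0) ∈ N := by
  let P : Submodule K K[X] := (N.restrictScalars K).comap (LinearMap.inl K K[X] K[X])
  change p ∈ P
  obtain ⟨q, hq0, hq⟩ : ∃ q ≠ 0, q ∈ P := by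
    obtain ⟨m, hm, hm0⟩ := Submodule.exists_mem_ne_zero_of_ne_bot hN
    rcases eq_or_ne m.2 0 with hm₂ | hm₂
    · exact ⟨m.1, fun h => hm0 (Prod.ext h hm₂), by simpa [P, ← hm₂] using hm⟩
    · exact exists_mk_zero_mem_of_snd_ne_zero hr hm hm₂
  have hA (p) (hp : p ∈ P) : taylor 1 p ∈ P := by
    simpa [P, a_smul] using N.smul_mem (a K r) hp
  have hB (p) (hp : p ∈ P) : X * taylor ((r : K) - 1) p ∈ P := by
    simpa [P, b_smul] using N.smul_mem (b K r) hp
  rw [eq_top_of_X_mul_taylor_mem P _ (one_mem_of_taylor_one_mem P hA hq hq0) hB]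
  trivial

theorem isMonolithic (hr : 1 ≤ r) : IsMonolithic (OreExt K r) (K[X] × K[X]) := fun h => by
  have h1 : ((1 : K[X]), (0 : K[X])) ∈ sInf {N | N ≠ ⊥} :=
    Submodule.mem_sInf.mpr fun N hN => mk_zero_mem_of_ne_bot hr hN 1
  simp [h] at h1

theorem span_singleton_zero_one (hr : 1 ≤ r) :
    Submodule.span (OreExt K r) {((0 : K[X]), (1 : K[X]))} = ⊤ := by
  set N := Submodule.span (OreExt K r) {((0 : K[X]), (1 : K[X]))}
  have hgen : ((0 : K[X]), (1 : K[X])) ∈ N := Submodule.mem_span_singleton_self _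
  have hfst := mk_zero_mem_of_ne_bot hr (N := N) fun h => by simp [h] at hgen
  have hsnd (q : K[X]) : (0, q) ∈ N := by
    induction q using Polynomial.induction_on' with
    | add p q hp hq => simpa using N.add_mem hp hq
    | monomial n c =>
      have h := N.smul_of_tower_mem c (N.smul_mem (a K r ^ n) hgen)
      simpa [a_pow_smul, smul_X_eq_monomial] using h
  refine Submodule.eq_top_iff'.mpr fun m => ?_
  simpa using N.add_mem (hfst m.1) (hsnd m.2)

theorem module_finite (hr : 1 ≤ r) : Module.Finite (OreExt K r) (K[X] × K[X]) :=
  ⟨⟨{(0, 1)}, by simpa using span_singleton_zero_one hr⟩⟩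

end OreExt

/-- over a field of characteristic zero, for `r ≥ 1`, the Ore extension
`A = K⟨a,b⟩/(ab − ba − a^r)` has a finitely generated monolithic left module that is not
artinian, i.e. does not have property `(⋄)`. -/
theorem oreExt_not_hasDiamond {K : Type u} [Field K] [CharZero K] (r : ℕ) (hr : 1 ≤ r) :
    ¬ HasDiamond (OreExt K r) := fun h =>
  OreExt.not_isArtinian hr <|
    h (K[X] × K[X]) (OreExt.module_finite hr) (OreExt.isMonolithic hr)

end
end
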